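/- arXiv:1308.3388 — 5 statements merged into one kernel-verified Lean document; each statement's English description precedes it below -/
import Mathlib

section
/- In the ILT model, for any two distinct nodes x, y of G_t (t ≥ 0), the graph distances in G_{t+1} satisfy d_{t+1}(x', y) = d_{t+1}(x, y') = d_{t+1}(x, y) = d_t(x, y), where x', y' are the clones of x and y. -/
open SimpleGraph Finset

universe u
variable {V : Type u}

/-- One step of the Iterated Local Transitivity model: every vertex `x` gets a
clone `Sum.inr x` joined to `x` and all of its neighbours; old vertices are `Sum.inl`. -/
def ILTstep (G : SimpleGraph V) : SimpleGraph (V ⊕ V) where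
  Adj a b := match a, b with
    | Sum.inl x, Sum.inl y => G.Adj x y
    | Sum.inl x, Sum.inr y => x = y ∨ G.Adj x y
    | Sum.inr x, Sum.inl y => x = y ∨ G.Adj x y
    | Sum.inr _, Sum.inr _ => False
  symm := by
    constructor
    rintro (x | x) (y | y) h
    · exact G.adj_symm h
    · exact h.imp Eq.symm (fun hh => G.adj_symm hh)
    · exact h.imp Eq.symm (fun hh => G.adj_symm hh)
    · exact h.elim
  loopless := by
    constructor
    rintro (x | x) h
    · exact G.irrefl h
    · exact h

instance ILTstepDecAdj (G : SimpleGraph V) [DecidableEq V] [DecidableRel G.Adj] :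
    DecidableRel (ILTstep G).Adj := fun a b =>
  match a, b with
  | Sum.inl x, Sum.inl y => inferInstanceAs (Decidable (G.Adj x y))
  | Sum.inl x, Sum.inr y => inferInstanceAs (Decidable (x = y ∨ G.Adj x y))
  | Sum.inr x, Sum.inl y => inferInstanceAs (Decidable (x = y ∨ G.Adj x y))
  | Sum.inr _, Sum.inr _ => inferInstanceAs (Decidable False)

/-- The vertex set of the ILT model at time `t`. -/
def ILTV (V : Type u) : ℕ → Type u
  | 0 => V
  | t + 1 => ILTV V t ⊕ ILTV V t

/-- The graph of the ILT model at time `t`, starting from `G`. -/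
def ILTG (G : SimpleGraph V) : (t : ℕ) → SimpleGraph (ILTV V t)
  | 0 => G
  | t + 1 => ILTstep (ILTG G t)

instance ILTVFintype [Fintype V] : ∀ t, Fintype (ILTV V t)
  | 0 => inferInstanceAs (Fintype V)
  | t + 1 => letI := ILTVFintype t
             inferInstanceAs (Fintype (ILTV V t ⊕ ILTV V t))

instance ILTVDecEq [DecidableEq V] : ∀ t, DecidableEq (ILTV V t)
  | 0 => inferInstanceAs (DecidableEq V)
  | t + 1 => letI := ILTVDecEq t
             inferInstanceAs (DecidableEq (ILTV V t ⊕ ILTV V t))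

instance ILTGDecAdj (G : SimpleGraph V) [DecidableEq V] [DecidableRel G.Adj] :
    ∀ t, DecidableRel (ILTG G t).Adj
  | 0 => inferInstanceAs (DecidableRel G.Adj)
  | t + 1 => letI : DecidableEq (ILTV V t) := ILTVDecEq t
             letI : DecidableRel (ILTG G t).Adj := ILTGDecAdj G t
             ILTstepDecAdj (ILTG G t)

/-- The volume of a graph: the sum of the degrees of its vertices. -/
def graphVol [Fintype V] (G : SimpleGraph V) [DecidableRel G.Adj] : ℕ :=
  ∑ v, G.degree v

/-- The Wiener index: the sum of distances over unordered pairs of vertices. -/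
noncomputable def wienerIndex [Fintype V] (G : SimpleGraph V) : ℕ :=
  (∑ x : V, ∑ y : V, G.dist x y) / 2

/-!
Folding each clone `x'` onto `x` sends every edge of `G_{t+1}` to an edge or a single vertex of
`G_t`, so distances cannot shrink under the fold; conversely a shortest `x`–`y` path of `G_t`
lifts to `G_{t+1}`, and when `x ≠ y` its first edge `x z` may be replaced by `x' z`, since the
clone `x'` is adjacent to every neighbour of `x`.
-/

namespace SimpleGraph

variable {V W : Type*} {G : SimpleGraph V} {H : SimpleGraph W}

theorem edist_apply_le_of_eq_or_adj (f : V → W)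
    (hf : ∀ ⦃a b⦄, G.Adj a b → f a = f b ∨ H.Adj (f a) (f b)) (a b : V) :
    H.edist (f a) (f b) ≤ G.edist a b := by
  refine le_iInf fun w => ?_
  induction w with
  | nil => simp
  | @cons a c b hac w ih =>
    have hstep : H.edist (f a) (f c) ≤ 1 :=
      edist_le_one_iff_adj_or_eq.mpr (hf hac).symm
    calc H.edist (f a) (f b) ≤ H.edist (f a) (f c) + H.edist (f c) (f b) := H.edist_triangle
      _ ≤ 1 + w.length := add_le_add hstep ih
      _ = (Walk.cons hac w).length := by rw [Walk.length_cons, Nat.cast_succ, add_comm]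

theorem Hom.edist_apply_le (φ : G →g H) (a b : V) : H.edist (φ a) (φ b) ≤ G.edist a b :=
  edist_apply_le_of_eq_or_adj φ (fun _ _ h => Or.inr (φ.map_adj h)) a b

end SimpleGraph

namespace ILTstep

variable {V : Type*} (G : SimpleGraph V)

def inlHom : G →g ILTstep G := ⟨Sum.inl, id⟩

variable {G}

theorem eq_or_adj_fold {a b : V ⊕ V} (h : (ILTstep G).Adj a b) :
    Sum.elim id id a = Sum.elim id id b ∨ G.Adj (Sum.elim id id a) (Sum.elim id id b) := by
  cases a <;> cases b <;> simp_all [ILTstep]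

theorem edist_fold_le (a b : V ⊕ V) :
    G.edist (Sum.elim id id a) (Sum.elim id id b) ≤ (ILTstep G).edist a b :=
  edist_apply_le_of_eq_or_adj (Sum.elim id id) (fun _ _ => eq_or_adj_fold) a b

theorem edist_inl_inl (x y : V) :
    (ILTstep G).edist (Sum.inl x) (Sum.inl y) = G.edist x y :=
  le_antisymm ((inlHom G).edist_apply_le x y) (edist_fold_le _ _)

theorem edist_inr_inl {x y : V} (hxy : x ≠ y) :
    (ILTstep G).edist (Sum.inr x) (Sum.inl y) = G.edist x y := by
  refine le_antisymm ?_ (edist_fold_le _ _)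
  by_cases hr : G.Reachable x y
  · obtain ⟨w, hw⟩ := hr.exists_walk_length_eq_edist
    cases w with
    | nil => exact absurd rfl hxy
    | @cons _ z _ hxz w =>
      have hzx : (ILTstep G).Adj (Sum.inr x) (inlHom G z) := Or.inr hxz
      calc (ILTstep G).edist (Sum.inr x) (Sum.inl y)
          ≤ (Walk.cons hzx (w.map (inlHom G))).length := edist_le _
        _ = G.edist x y := by rw [← hw, Walk.length_cons, Walk.length_map, Walk.length_cons]
  · exact (edist_eq_top_of_not_reachable hr).symm ▸ le_top

end ILTstep

theorem ILT_dist_clone_general (G : SimpleGraph V)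
    (x y : V) (hxy : x ≠ y) :
    (ILTstep G).dist (Sum.inr x) (Sum.inl y) = G.dist x y ∧
    (ILTstep G).dist (Sum.inl x) (Sum.inr y) = G.dist x y ∧
    (ILTstep G).dist (Sum.inl x) (Sum.inl y) = G.dist x y := by
  simp only [SimpleGraph.dist]
  refine ⟨by rw [ILTstep.edist_inr_inl hxy], ?_, by rw [ILTstep.edist_inl_inl]⟩
  rw [edist_comm, ILTstep.edist_inr_inl hxy.symm, edist_comm]

theorem ILT_dist_clone (G : SimpleGraph V) (hG : G.Connected)
    (x y : V) (hxy : x ≠ y) :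
    (ILTstep G).dist (Sum.inr x) (Sum.inl y) = G.dist x y ∧
    (ILTstep G).dist (Sum.inl x) (Sum.inr y) = G.dist x y ∧
    (ILTstep G).dist (Sum.inl x) (Sum.inl y) = G.dist x y :=
  ILT_dist_clone_general G x y hxy
end

section
/- Let y be a node of G_t in the ILT model whose binary descendant sequence (of length t, with 1 denoting a cloning step) contains exactly k zeros, descending from a node x of G_0. Then 2^k·(deg_0(x) + 1) + t − k − 1 ≤ deg_t(y) ≤ 2^k·(deg_0(x) + t − k + 1) − 1. -/
open SimpleGraph Finset

universe u
variable {V : Type u}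

/-- The descendant of `x ∈ V(G_0)` at time `s.length` given by the binary sequence `s`
(read with the most recent time-step first), where `true` means the node is the clone
created at that step and `false` means the node persists from the previous step. -/
def descend (x : V) : (s : List Bool) → ILTV V s.length
  | [] => x
  | b :: rest =>
      if b then Sum.inr (descend x rest) else Sum.inl (descend x rest)

/-! In terms of `D = deg + 1` the degree recurrences read `D ↦ 2 D` for a persisting node and
`D ↦ D + 1` for a clone. Starting from `D₀`, after `k` doublings and `m` increments in some order,
`D` is smallest when all doublings come first and largest when they all come last, which gives
`2 ^ k * D₀ + m ≤ D ≤ 2 ^ k * (D₀ + m)`. -/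

section ILTstep

variable [Fintype V] [DecidableEq V] (G : SimpleGraph V) [DecidableRel G.Adj]

lemma ILTstep_neighborFinset_inl (x : V) :
    (ILTstep G).neighborFinset (Sum.inl x) =
      (G.neighborFinset x).disjSum (insert x (G.neighborFinset x)) := by
  ext (y | y) <;> rw [mem_neighborFinset] <;> simp [ILTstep, eq_comm]

lemma ILTstep_neighborFinset_inr (x : V) :
    (ILTstep G).neighborFinset (Sum.inr x) = (insert x (G.neighborFinset x)).disjSum ∅ := by
  ext (y | y) <;> rw [mem_neighborFinset] <;> simp [ILTstep, eq_comm]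

lemma ILTstep_degree_inl (x : V) : (ILTstep G).degree (Sum.inl x) = 2 * G.degree x + 1 := by
  rw [← card_neighborFinset_eq_degree, ILTstep_neighborFinset_inl, card_disjSum,
    card_insert_of_notMem (notMem_neighborFinset_self G x), card_neighborFinset_eq_degree]
  ring

lemma ILTstep_degree_inr (x : V) : (ILTstep G).degree (Sum.inr x) = G.degree x + 1 := by
  rw [← card_neighborFinset_eq_degree, ILTstep_neighborFinset_inr, card_disjSum,
    card_insert_of_notMem (notMem_neighborFinset_self G x), card_neighborFinset_eq_degree]
  rfl

lemma degree_descend_cons_false (x : V) (s : List Bool) :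
    (ILTG G (false :: s).length).degree (descend x (false :: s)) =
      2 * (ILTG G s.length).degree (descend x s) + 1 :=
  ILTstep_degree_inl _ _

lemma degree_descend_cons_true (x : V) (s : List Bool) :
    (ILTG G (true :: s).length).degree (descend x (true :: s)) =
      (ILTG G s.length).degree (descend x s) + 1 :=
  ILTstep_degree_inr _ _

end ILTstep

lemma bounds_of_double_or_succ {f : List Bool → ℕ} (hfalse : ∀ s, f (false :: s) = 2 * f s)
    (htrue : ∀ s, f (true :: s) = f s + 1) (s : List Bool) :
    2 ^ s.count false * f [] + s.count true ≤ f s ∧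
      f s ≤ 2 ^ s.count false * (f [] + s.count true) := by
  induction s with
  | nil => simp
  | cons b s ih =>
    obtain ⟨hlow, hupp⟩ := ih
    cases b with
    | false =>
      simp only [hfalse, List.count_cons_self, List.count_cons_of_ne Bool.false_ne_true, pow_succ]
      constructor <;> nlinarith
    | true =>
      have hpos : 1 ≤ 2 ^ s.count false := Nat.one_le_two_pow
      simp only [htrue, List.count_cons_self, List.count_cons_of_ne Bool.false_ne_true.symm]
      constructor <;> nlinarith

theorem ILT_degree_bounds [Fintype V] [DecidableEq V]
    (G : SimpleGraph V) [DecidableRel G.Adj] (x : V) (s : List Bool) :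
    (2 ^ (s.count false) * ((G.degree x : ℤ) + 1) + (s.length : ℤ) - (s.count false : ℤ) - 1
        ≤ ((ILTG G s.length).degree (descend x s) : ℤ)) ∧
    (((ILTG G s.length).degree (descend x s) : ℤ)
        ≤ 2 ^ (s.count false) * ((G.degree x : ℤ) + (s.length : ℤ) - (s.count false : ℤ) + 1) - 1) := by
  obtain ⟨hlow, hupp⟩ := bounds_of_double_or_succ
    (f := fun s => (ILTG G s.length).degree (descend x s) + 1)
    (fun s => by simp only [degree_descend_cons_false]; ring)
    (fun s => by simp only [degree_descend_cons_true]) s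
  have hdeg₀ : (ILTG G [].length).degree (descend x []) = G.degree x := rfl
  have hlen : (s.length : ℤ) = s.count true + s.count false := by
    exact_mod_cast (List.count_true_add_count_false s).symm
  simp only [hdeg₀] at hlow hupp
  zify at hlow hupp
  rw [hlen]
  constructor <;> linarith
end

section
/- If ρ is an eigenvalue of the adjacency matrix A of G_t in the ILT model, then both (ρ + √(ρ² + 4(ρ+1)²))/2 and (ρ − √(ρ² + 4(ρ+1)²))/2 are eigenvalues of the adjacency matrix of G_{t+1}. -/
open SimpleGraph Finset

universe u
variable {V : Type u}

/-!
On an eigenvector `v` of `A` with eigenvalue `ρ`, the blocks `A`, `A + 1`, `A + 1`, `0` of the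
adjacency matrix of `ILTstep G` act as the scalars `ρ`, `ρ + 1`, `ρ + 1`, `0`. Hence `(a • v, b • v)`
is an eigenvector of the block matrix whenever `(a, b)` is an eigenvector of
`!![ρ, ρ + 1; ρ + 1, 0]`, whose eigenvalues are the roots `(ρ ± √(ρ² + 4(ρ + 1)²)) / 2` of
`μ² - ρ μ - (ρ + 1)²`.
-/

namespace Matrix

variable {K n : Type*} [Field K] [Fintype n] [DecidableEq n]

theorem mem_spectrum_iff_exists_mulVec_eq_smul {A : Matrix n n K} {μ : K} :
    μ ∈ spectrum K A ↔ ∃ v ≠ 0, A *ᵥ v = μ • v := by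
  rw [spectrum.mem_iff, isUnit_iff_isUnit_det, isUnit_iff_ne_zero, not_not,
    ← exists_mulVec_eq_zero_iff]
  simp only [sub_mulVec, Algebra.algebraMap_eq_smul_one, smul_mulVec, one_mulVec, sub_eq_zero,
    eq_comm]

theorem mem_spectrum_fin_two_iff {α β γ δ μ : K} :
    μ ∈ spectrum K !![α, β; γ, δ] ↔ (μ - α) * (μ - δ) - β * γ = 0 := by
  rw [spectrum.mem_iff, isUnit_iff_isUnit_det, isUnit_iff_ne_zero, not_not, det_fin_two]
  simp [Algebra.algebraMap_eq_smul_one]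

theorem mem_spectrum_fromBlocks_of_mulVec_eq_smul {A B C D : Matrix n n K} {v : n → K}
    (hv : v ≠ 0) {α β γ δ μ : K} (hA : A *ᵥ v = α • v) (hB : B *ᵥ v = β • v)
    (hC : C *ᵥ v = γ • v) (hD : D *ᵥ v = δ • v) (hμ : μ ∈ spectrum K !![α, β; γ, δ]) :
    μ ∈ spectrum K (fromBlocks A B C D) := by
  obtain ⟨w, hw, hMw⟩ := mem_spectrum_iff_exists_mulVec_eq_smul.mp hμ
  have h0 : α * w 0 + β * w 1 = μ * w 0 := by simpa [mulVec, dotProduct] using congrFun hMw 0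
  have h1 : γ * w 0 + δ * w 1 = μ * w 1 := by simpa [mulVec, dotProduct] using congrFun hMw 1
  refine mem_spectrum_iff_exists_mulVec_eq_smul.mpr ⟨Sum.elim (w 0 • v) (w 1 • v), ?_, ?_⟩
  · intro hzero
    have hw0 : w 0 • v = 0 := congrArg (· ∘ Sum.inl) hzero
    have hw1 : w 1 • v = 0 := congrArg (· ∘ Sum.inr) hzero
    refine hw (funext fun i => ?_)
    fin_cases i
    · exact (smul_eq_zero.mp hw0).resolve_right hv
    · exact (smul_eq_zero.mp hw1).resolve_right hv
  · rw [fromBlocks_mulVec, Sum.elim_comp_inl, Sum.elim_comp_inr]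
    ext (j | j)
    · simp only [mulVec_smul, hA, hB, Sum.elim_inl, Pi.add_apply, Pi.smul_apply, smul_eq_mul]
      linear_combination v j * h0
    · simp only [mulVec_smul, hC, hD, Sum.elim_inr, Pi.add_apply, Pi.smul_apply, smul_eq_mul]
      linear_combination v j * h1

end Matrix

open Matrix

section ILTstep

variable (G : SimpleGraph V) {x y : V}

@[simp] lemma ILTstep_adj_inl_inl : (ILTstep G).Adj (.inl x) (.inl y) ↔ G.Adj x y := .rfl
@[simp] lemma ILTstep_adj_inl_inr : (ILTstep G).Adj (.inl x) (.inr y) ↔ x = y ∨ G.Adj x y := .rfl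
@[simp] lemma ILTstep_adj_inr_inl : (ILTstep G).Adj (.inr x) (.inl y) ↔ x = y ∨ G.Adj x y := .rfl
@[simp] lemma ILTstep_not_adj_inr_inr : ¬(ILTstep G).Adj (.inr x) (.inr y) := id

lemma ILTstep_adjMatrix (R : Type*) [NonAssocSemiring R] [Fintype V] [DecidableEq V]
    [DecidableRel G.Adj] :
    (ILTstep G).adjMatrix R =
      fromBlocks (G.adjMatrix R) (G.adjMatrix R + 1) (G.adjMatrix R + 1) 0 := by
  ext (i | i) (j | j) <;> by_cases hij : i = j <;>
    simp [adjMatrix_apply, one_apply, hij]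

end ILTstep

theorem ILT_adjacency_eigenvalues [Fintype V] [DecidableEq V]
    (G : SimpleGraph V) [DecidableRel G.Adj] (ρ : ℝ)
    (h : ρ ∈ spectrum ℝ (G.adjMatrix ℝ)) :
    (ρ + Real.sqrt (ρ ^ 2 + 4 * (ρ + 1) ^ 2)) / 2
        ∈ spectrum ℝ ((ILTstep G).adjMatrix ℝ) ∧
    (ρ - Real.sqrt (ρ ^ 2 + 4 * (ρ + 1) ^ 2)) / 2
        ∈ spectrum ℝ ((ILTstep G).adjMatrix ℝ) := by
  obtain ⟨v, hv, hAv⟩ := mem_spectrum_iff_exists_mulVec_eq_smul.mp h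
  have hA1v : (G.adjMatrix ℝ + 1) *ᵥ v = (ρ + 1) • v := by
    rw [add_mulVec, one_mulVec, hAv, add_smul, one_smul]
  have h0v : (0 : Matrix V V ℝ) *ᵥ v = (0 : ℝ) • v := by
    rw [zero_mulVec, zero_smul]
  have root_mem (μ : ℝ) (hμ : (μ - ρ) * μ = (ρ + 1) ^ 2) :
      μ ∈ spectrum ℝ ((ILTstep G).adjMatrix ℝ) := by
    rw [ILTstep_adjMatrix]
    refine mem_spectrum_fromBlocks_of_mulVec_eq_smul hv hAv hA1v hA1v h0v ?_
    rw [mem_spectrum_fin_two_iff]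
    linear_combination hμ
  have hs : Real.sqrt (ρ ^ 2 + 4 * (ρ + 1) ^ 2) ^ 2 = ρ ^ 2 + 4 * (ρ + 1) ^ 2 :=
    Real.sq_sqrt (by positivity)
  exact ⟨root_mem _ (by linear_combination hs / 4), root_mem _ (by linear_combination hs / 4)⟩
end

section
/- If a graph G contains an independent set X with vol(X)/vol(V∖X) > 1/2, then the spectral gap λ of the normalized Laplacian of G satisfies λ > 1/2. More generally, for any independent set X, λ ≥ vol(X)/vol(V∖X). -/
open SimpleGraph Finset

universe u
variable {V : Type u}

/-- The normalized Laplacian `I - D^{-1/2} A D^{-1/2}` of a graph. -/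
noncomputable def normalizedLaplacian [Fintype V] [DecidableEq V]
    (G : SimpleGraph V) [DecidableRel G.Adj] : Matrix V V ℝ :=
  1 - Matrix.diagonal (fun v => (Real.sqrt (G.degree v))⁻¹) * G.adjMatrix ℝ *
      Matrix.diagonal (fun v => (Real.sqrt (G.degree v))⁻¹)

/-- The eigenvalues of a Hermitian matrix, listed in nondecreasing order. -/
noncomputable def sortedEigs {n : Type*} [Fintype n] [DecidableEq n]
    (M : Matrix n n ℝ) (hM : M.IsHermitian) : Fin (Fintype.card n) → ℝ :=
  (hM.eigenvalues ∘ (Fintype.equivFin n).symm) ∘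
    Tuple.sort (hM.eigenvalues ∘ (Fintype.equivFin n).symm)

/-- The spectral gap `max {|λ₁ - 1|, |λ_{n-1} - 1|}` of a Hermitian matrix
(with eigenvalues `λ₀ ≤ λ₁ ≤ ⋯ ≤ λ_{n-1}`). -/
noncomputable def spectralGap {n : Type*} [Fintype n] [DecidableEq n]
    (M : Matrix n n ℝ) (hM : M.IsHermitian) (hn : 1 < Fintype.card n) : ℝ :=
  max |sortedEigs M hM ⟨1, hn⟩ - 1|
      |sortedEigs M hM ⟨Fintype.card n - 1, by omega⟩ - 1|

/-! The vector `φ = D^{1/2} 𝟙` lies in the kernel of the normalized Laplacian `L`. Since `X` is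
independent, `D^{-1/2} A D^{-1/2}` maps the restriction `g` of `φ` to `X` to a vector supported
off `X`, so `⟪g, L g⟫ = ‖g‖²`. Testing the largest eigenvalue `λ` of `L` against
`‖φ‖² g - ‖g‖² φ` gives the expander mixing bound `vol(X)² ≤ (λ - 1) vol(X) vol(V ∖ X)`, whence
`vol(X) / vol(V ∖ X) ≤ λ - 1 ≤ |λ - 1|`. -/

open Matrix

section Rayleigh

variable {n : Type*} [Fintype n] [DecidableEq n]

theorem Matrix.IsHermitian.dotProduct_mulVec_le {A : Matrix n n ℝ} (hA : A.IsHermitian)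
    {μ : ℝ} (hμ : ∀ i, hA.eigenvalues i ≤ μ) (x : n → ℝ) :
    x ⬝ᵥ A *ᵥ x ≤ μ * (x ⬝ᵥ x) := by
  have hB : (algebraMap ℝ (Matrix n n ℝ) μ - A).IsHermitian := (isHermitian_diagonal _).sub hA
  have hpsd : (algebraMap ℝ (Matrix n n ℝ) μ - A).PosSemidef := by
    refine hB.posSemidef_iff_eigenvalues_nonneg.2 fun i => ?_
    have hi := hB.eigenvalues_mem_spectrum_real i
    rw [← spectrum.singleton_sub_eq, hA.spectrum_real_eq_range_eigenvalues] at hi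
    obtain ⟨_, rfl, _, ⟨j, rfl⟩, hj⟩ := hi
    simpa [← hj] using hμ j
  simpa [sub_mulVec, Algebra.algebraMap_eq_smul_one, smul_mulVec, dotProduct_smul] using
    hpsd.dotProduct_mulVec_nonneg x

theorem eigenvalues_le_sortedEigs_last {M : Matrix n n ℝ} (hM : M.IsHermitian)
    (hn : 0 < Fintype.card n) (i : n) :
    hM.eigenvalues i ≤ sortedEigs M hM ⟨Fintype.card n - 1, Nat.sub_one_lt_of_lt hn⟩ := by
  have hk : sortedEigs M hM ((Tuple.sort (hM.eigenvalues ∘ (Fintype.equivFin n).symm)).symm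
      (Fintype.equivFin n i)) = hM.eigenvalues i := by
    simp [sortedEigs]
  rw [← hk]
  exact Tuple.monotone_sort _ (Fin.le_def.2 (Nat.le_sub_one_of_lt (Fin.isLt _)))

theorem sq_le_mul_of_dotProduct_mulVec_eq {L : Matrix n n ℝ} (hL : L.IsHermitian) {μ : ℝ}
    (hμ : ∀ i, hL.eigenvalues i ≤ μ) {φ g : n → ℝ} (hφ : L *ᵥ φ = 0)
    (hgL : g ⬝ᵥ L *ᵥ g = g ⬝ᵥ g) (hgφ : g ⬝ᵥ φ = g ⬝ᵥ g) :
    (g ⬝ᵥ g) ^ 2 ≤ (μ - 1) * (g ⬝ᵥ g) * (φ ⬝ᵥ φ - g ⬝ᵥ g) := by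
  have hφg : φ ⬝ᵥ g = g ⬝ᵥ g := by rw [dotProduct_comm, hgφ]
  have hφLg : φ ⬝ᵥ L *ᵥ g = 0 := by
    rw [dotProduct_mulVec, ← mulVec_transpose, ← conjTranspose_eq_transpose_of_trivial, hL.eq,
      hφ, zero_dotProduct]
  have hray := hL.dotProduct_mulVec_le hμ ((φ ⬝ᵥ φ) • g - (g ⬝ᵥ g) • φ)
  simp only [mulVec_sub, mulVec_smul, hφ, smul_zero, sub_zero, dotProduct_sub, sub_dotProduct,
    dotProduct_smul, smul_dotProduct, hgL, hφLg, hgφ, hφg, smul_eq_mul] at hray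
  have hb : 0 ≤ φ ⬝ᵥ φ := by simpa using dotProduct_self_star_nonneg φ
  rcases hb.eq_or_lt with hb | hb
  · have hφ0 : φ = 0 := dotProduct_self_eq_zero.1 hb.symm
    simp [← hgφ, hφ0]
  · nlinarith

end Rayleigh

theorem div_le_abs_of_sq_le_mul {a c t : ℝ} (ha : 0 ≤ a) (hc : 0 ≤ c) (h : a ^ 2 ≤ t * a * c) :
    a / c ≤ |t| := by
  rcases ha.eq_or_lt with rfl | ha
  · simp
  rcases hc.eq_or_lt with rfl | hc
  · simp
  have hac : a ≤ t * c := by nlinarith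
  exact ((div_le_iff₀ hc).2 hac).trans (le_abs_self t)

section NormalizedLaplacian

variable [Fintype V] [DecidableEq V] (G : SimpleGraph V) [DecidableRel G.Adj]

theorem normalizedLaplacian_mulVec_apply (x : V → ℝ) (u : V) :
    (normalizedLaplacian G *ᵥ x) u =
      x u - (√(G.degree u))⁻¹ * ∑ v ∈ G.neighborFinset u, (√(G.degree v))⁻¹ * x v := by
  simp [normalizedLaplacian, sub_mulVec, ← mulVec_mulVec, mulVec_diagonal, adjMatrix_mulVec_apply]

theorem normalizedLaplacian_mulVec_sqrt_degree :
    normalizedLaplacian G *ᵥ (fun v => √(G.degree v)) = 0 := by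
  funext u
  have hdeg : ∀ v ∈ G.neighborFinset u, (√(G.degree v))⁻¹ * √(G.degree v) = 1 := fun v hv =>
    inv_mul_cancel₀ (Real.sqrt_pos.2 (Nat.cast_pos.2
      (G.degree_pos_iff_exists_adj v |>.2 ⟨u, ((G.mem_neighborFinset u v).1 hv).symm⟩))).ne'
  rw [normalizedLaplacian_mulVec_apply, sum_congr rfl hdeg, sum_const,
    card_neighborFinset_eq_degree, nsmul_one, Pi.zero_apply, inv_mul_eq_div, Real.div_sqrt,
    sub_self]

theorem dotProduct_normalizedLaplacian_mulVec_self_of_isIndepSet {X : Finset V}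
    (hX : G.IsIndepSet X) {x : V → ℝ} (hx : ∀ v ∉ X, x v = 0) :
    x ⬝ᵥ normalizedLaplacian G *ᵥ x = x ⬝ᵥ x := by
  refine sum_congr rfl fun u _ => ?_
  by_cases hu : u ∈ X
  · have hsum : ∑ v ∈ G.neighborFinset u, (√(G.degree v))⁻¹ * x v = 0 := by
      refine sum_eq_zero fun v hv => ?_
      have hadj := (G.mem_neighborFinset u v).1 hv
      rw [hx v fun hvX => hX hu hvX hadj.ne hadj, mul_zero]
    rw [normalizedLaplacian_mulVec_apply, hsum, mul_zero, sub_zero]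
  · simp [hx u hu]

end NormalizedLaplacian

theorem independent_set_spectral_gap_general [Fintype V] [DecidableEq V]
    (G : SimpleGraph V) [DecidableRel G.Adj]
    (hn : 1 < Fintype.card V)
    (hH : (normalizedLaplacian G).IsHermitian)
    (X : Finset V) (hX : ∀ x ∈ X, ∀ y ∈ X, ¬ G.Adj x y) :
    ((∑ v ∈ X, G.degree v : ℝ) / (∑ v ∈ Xᶜ, G.degree v : ℝ)
        ≤ spectralGap (normalizedLaplacian G) hH hn) ∧
    (1 / 2 < (∑ v ∈ X, G.degree v : ℝ) / (∑ v ∈ Xᶜ, G.degree v : ℝ) →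
        1 / 2 < spectralGap (normalizedLaplacian G) hH hn) := by
  set φ : V → ℝ := fun v => √(G.degree v)
  set g : V → ℝ := fun v => if v ∈ X then φ v else 0
  have hgg : g ⬝ᵥ g = ∑ v ∈ X, (G.degree v : ℝ) := by simp [g, φ, dotProduct]
  have hgφ : g ⬝ᵥ φ = g ⬝ᵥ g := by rw [hgg]; simp [g, φ, dotProduct]
  have hφφ : φ ⬝ᵥ φ - g ⬝ᵥ g = ∑ v ∈ Xᶜ, (G.degree v : ℝ) := by
    rw [hgg, sub_eq_iff_eq_add', sum_add_sum_compl]; simp [φ, dotProduct]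
  have hgL : g ⬝ᵥ normalizedLaplacian G *ᵥ g = g ⬝ᵥ g :=
    dotProduct_normalizedLaplacian_mulVec_self_of_isIndepSet G
      (fun x hx y hy _ => hX x hx y hy) fun v hv => if_neg hv
  have hmix := sq_le_mul_of_dotProduct_mulVec_eq hH
    (eigenvalues_le_sortedEigs_last hH (by omega)) (normalizedLaplacian_mulVec_sqrt_degree G)
    hgL hgφ
  rw [hφφ, hgg] at hmix
  have hratio : (∑ v ∈ X, G.degree v : ℝ) / (∑ v ∈ Xᶜ, G.degree v : ℝ)
      ≤ spectralGap (normalizedLaplacian G) hH hn :=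
    (div_le_abs_of_sq_le_mul (sum_nonneg fun v _ => Nat.cast_nonneg _)
      (sum_nonneg fun v _ => Nat.cast_nonneg _) hmix).trans (le_max_right _ _)
  exact ⟨hratio, fun h => h.trans_le hratio⟩

theorem independent_set_spectral_gap [Fintype V] [DecidableEq V]
    (G : SimpleGraph V) [DecidableRel G.Adj]
    (hd : ∀ v, 0 < G.degree v) (hn : 1 < Fintype.card V)
    (hH : (normalizedLaplacian G).IsHermitian)
    (X : Finset V) (hX : ∀ x ∈ X, ∀ y ∈ X, ¬ G.Adj x y) :
    ((∑ v ∈ X, G.degree v : ℝ) / (∑ v ∈ Xᶜ, G.degree v : ℝ)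
        ≤ spectralGap (normalizedLaplacian G) hH hn) ∧
    (1 / 2 < (∑ v ∈ X, G.degree v : ℝ) / (∑ v ∈ Xᶜ, G.degree v : ℝ) →
        1 / 2 < spectralGap (normalizedLaplacian G) hH hn) :=
  independent_set_spectral_gap_general G hn hH X hX
end

section
/- In the ILT model, the domination number is invariant: γ(G_{t+1}) = γ(G_t) for all t ≥ 0, and hence γ(G_t) = γ(G_0) for all t. -/
open SimpleGraph Finset

universe u
variable {V : Type u}

/-- The domination number: the minimum size of a set `S` such that every vertex
not in `S` has a neighbour in `S`. -/
noncomputable def dominationNumber [Fintype V] (G : SimpleGraph V) : ℕ :=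
  sInf {n | ∃ S : Finset V, S.card = n ∧ ∀ v ∉ S, ∃ u ∈ S, G.Adj u v}

/-!
A dominating set of `G` still dominates `ILTstep G`, since the clone of `v` is adjacent to `v`
and to all neighbours of `v`. Conversely, identifying every clone with its original turns a
dominating set of `ILTstep G` into a set of at most the same size dominating `G`: an old vertex
`v` dominated by the clone of `u` either is `u` itself or is adjacent to `u` in `G`.
-/

def IsDominatingSet (G : SimpleGraph V) (S : Finset V) : Prop :=
  ∀ v ∉ S, ∃ u ∈ S, G.Adj u v

theorem IsDominatingSet.map_inl_ILTstep {G : SimpleGraph V} {S : Finset V}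
    (hS : IsDominatingSet G S) : IsDominatingSet (ILTstep G) (S.map .inl) := by
  rintro (v | v) hv
  · obtain ⟨u, hu, huv⟩ := hS v (by simpa using hv)
    exact ⟨.inl u, mem_map_of_mem _ hu, huv⟩
  · by_cases hvS : v ∈ S
    · exact ⟨.inl v, mem_map_of_mem _ hvS, Or.inl rfl⟩
    · obtain ⟨u, hu, huv⟩ := hS v hvS
      exact ⟨.inl u, mem_map_of_mem _ hu, Or.inr huv⟩

theorem IsDominatingSet.image_elim_of_ILTstep [DecidableEq V] {G : SimpleGraph V}
    {S : Finset (V ⊕ V)} (hS : IsDominatingSet (ILTstep G) S) :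
    IsDominatingSet G (S.image (Sum.elim id id)) := by
  intro v hv
  have hvl : .inl v ∉ S := fun h => hv (mem_image_of_mem _ h)
  have hvr : .inr v ∉ S := fun h => hv (mem_image_of_mem _ h)
  obtain ⟨u | u, hu, huv⟩ := hS (.inl v) hvl
  · exact ⟨u, mem_image_of_mem _ hu, huv⟩
  · rcases huv with rfl | huv
    · exact absurd hu hvr
    · exact ⟨u, mem_image_of_mem _ hu, huv⟩

section Fintype

variable [Fintype V] {G : SimpleGraph V}

theorem dominationNumber_le_card {S : Finset V} (hS : IsDominatingSet G S) :
    dominationNumber G ≤ S.card :=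
  Nat.sInf_le ⟨S, rfl, hS⟩

theorem exists_isDominatingSet_card_eq_dominationNumber (G : SimpleGraph V) :
    ∃ S : Finset V, IsDominatingSet G S ∧ S.card = dominationNumber G := by
  obtain ⟨S, hcard, hS⟩ := Nat.sInf_mem (s := {n | ∃ S : Finset V, S.card = n ∧
    ∀ v ∉ S, ∃ u ∈ S, G.Adj u v}) ⟨_, univ, rfl, fun v hv => absurd (mem_univ v) hv⟩
  exact ⟨S, hS, hcard⟩

theorem dominationNumber_ILTstep (G : SimpleGraph V) :
    dominationNumber (ILTstep G) = dominationNumber G := by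
  classical
  apply le_antisymm
  · obtain ⟨S, hS, hcard⟩ := exists_isDominatingSet_card_eq_dominationNumber G
    calc dominationNumber (ILTstep G) ≤ (S.map .inl).card :=
          dominationNumber_le_card hS.map_inl_ILTstep
      _ = dominationNumber G := by rw [card_map, hcard]
  · obtain ⟨S, hS, hcard⟩ := exists_isDominatingSet_card_eq_dominationNumber (ILTstep G)
    calc dominationNumber G ≤ (S.image (Sum.elim id id)).card :=
          dominationNumber_le_card hS.image_elim_of_ILTstep
      _ ≤ S.card := card_image_le
      _ = dominationNumber (ILTstep G) := hcard

end Fintype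

theorem ILT_domination_number [Fintype V] (G : SimpleGraph V) :
    (∀ t, dominationNumber (ILTG G (t + 1)) = dominationNumber (ILTG G t)) ∧
    (∀ t, dominationNumber (ILTG G t) = dominationNumber G) := by
  have hstep (t : ℕ) : dominationNumber (ILTG G (t + 1)) = dominationNumber (ILTG G t) :=
    dominationNumber_ILTstep (ILTG G t)
  refine ⟨hstep, fun t => ?_⟩
  induction t with
  | zero => rfl
  | succ t ih => rw [hstep t, ih]
end
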